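/- If every hyperface of Q^n has at least m cusps where m ≥ 2(n-1), then c(Q^n) ≥ 3m - 2n + 1: as a purely arithmetic consequence, for natural numbers n, m with 8 ≤ n ≤ 12 and m ≥ 2*(n-1), and real numbers c ≥ m satisfying c ≥ 2*m - 2 + (2*n-3)/(m-1) + ((m-2*(n-1))/(m-1))*c', with c' ≥ m, it follows that c ≥ 3*m - 2*n + 1. -/

import Mathlib

/-!
Write `d = m - 2(n - 1) ≥ 0`. The right-hand side of the bound is nondecreasing in `c'` because its
coefficient `d / (m - 1)` is nonnegative, and at `c' = m` it equals `3m - 2n + 1` exactly, by the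
identity `2n - 3 + d m = (d + 1)(m - 1)`.
-/

theorem cusp_bound_at_self (m n : ℝ) (hm : m ≠ 1) :
    2 * m - 2 + (2 * n - 3) / (m - 1) + ((m - 2 * (n - 1)) / (m - 1)) * m =
      3 * m - 2 * n + 1 := by
  have hm' : m - 1 ≠ 0 := sub_ne_zero.mpr hm
  field_simp
  ring

theorem le_cusp_bound (m n c' : ℝ) (hmn : 2 * (n - 1) ≤ m) (hm : 1 < m) (hc' : m ≤ c') :
    3 * m - 2 * n + 1 ≤
      2 * m - 2 + (2 * n - 3) / (m - 1) + ((m - 2 * (n - 1)) / (m - 1)) * c' := by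
  have hcoeff : 0 ≤ (m - 2 * (n - 1)) / (m - 1) :=
    div_nonneg (sub_nonneg.mpr hmn) (sub_pos.mpr hm).le
  calc 3 * m - 2 * n + 1
      = 2 * m - 2 + (2 * n - 3) / (m - 1) + ((m - 2 * (n - 1)) / (m - 1)) * m :=
        (cusp_bound_at_self m n hm.ne').symm
    _ ≤ 2 * m - 2 + (2 * n - 3) / (m - 1) + ((m - 2 * (n - 1)) / (m - 1)) * c' := by
        gcongr

theorem stmt_17_general (n m : ℕ) (hn1 : 8 ≤ n) (hm : 2 * (n - 1) ≤ m)
    (c c' : ℝ) (hc' : (m : ℝ) ≤ c')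
    (hc : c ≥ 2 * (m : ℝ) - 2 + (2 * (n : ℝ) - 3) / ((m : ℝ) - 1) +
      (((m : ℝ) - 2 * ((n : ℝ) - 1)) / ((m : ℝ) - 1)) * c') :
    c ≥ 3 * (m : ℝ) - 2 * (n : ℝ) + 1 := by
  have hmn : 2 * ((n : ℝ) - 1) ≤ m := by
    have h : ((2 * (n - 1) : ℕ) : ℝ) ≤ m := by exact_mod_cast hm
    rwa [Nat.cast_mul, Nat.cast_sub (by omega), Nat.cast_ofNat, Nat.cast_one] at h
  have hm1 : (1 : ℝ) < m := by
    have : (8 : ℝ) ≤ n := by exact_mod_cast hn1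
    linarith
  exact (le_cusp_bound m n c' hmn hm1 hc').trans hc

theorem stmt_17 (n m : ℕ) (hn1 : 8 ≤ n) (hn2 : n ≤ 12) (hm : 2 * (n - 1) ≤ m)
    (c c' : ℝ) (hc' : (m : ℝ) ≤ c')
    (hc : c ≥ 2 * (m : ℝ) - 2 + (2 * (n : ℝ) - 3) / ((m : ℝ) - 1) +
      (((m : ℝ) - 2 * ((n : ℝ) - 1)) / ((m : ℝ) - 1)) * c') :
    c ≥ 3 * (m : ℝ) - 2 * (n : ℝ) + 1 :=
  stmt_17_general n m hn1 hm c c' hc' hc
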